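/- arXiv:1008.4711 — 3 statements merged into one kernel-verified Lean document; each statement's English description precedes it below -/
import Mathlib

section
/- Let β be a complex number with |β| > 1 and k a nonnegative integer. Then the limit as X → ∞ of (1/(X^k β^X)) · (∑_{N=1}^{X} N^k β^N) equals β/(β−1). -/
/-!
Substituting `N = X - j` turns the normalised sum into `∑_{j<X} (1 - j/X)^k β⁻¹^j`. Each term
tends to `β⁻¹^j` and is dominated by `‖β‖⁻¹^j`, so by Tannery's theorem the sum tends to
`∑ β⁻¹^j = β / (β - 1)`.
-/

open Filter Finset Topology

theorem Finset.sum_Icc_one_eq_sum_range_sub {M : Type*} [AddCommMonoid M] (g : ℕ → M) (n : ℕ) :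
    ∑ i ∈ Icc 1 n, g i = ∑ j ∈ range n, g (n - j) := by
  rw [range_eq_Ico, sum_Ico_reflect g 0 (Nat.le_succ n), Nat.add_sub_cancel_left, Nat.sub_zero]
  rfl

theorem tendsto_sum_range_of_dominated_convergence {G : Type*} [NormedAddCommGroup G]
    [CompleteSpace G] {f : ℕ → ℕ → G} {g : ℕ → G} {bound : ℕ → ℝ} (h_sum : Summable bound)
    (hab : ∀ j, Tendsto (f · j) atTop (𝓝 (g j)))
    (h_bound : ∀ n, ∀ j < n, ‖f n j‖ ≤ bound j) :
    Tendsto (fun n ↦ ∑ j ∈ range n, f n j) atTop (𝓝 (∑' j, g j)) := by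
  simp_rw [fun n ↦ sum_eq_tsum_indicator (f n) (range n)]
  refine tendsto_tsum_of_dominated_convergence h_sum (fun j ↦ (hab j).congr' ?_) ?_
  · filter_upwards [eventually_gt_atTop j] with n hn
    simp [hn]
  · refine Eventually.of_forall fun n j ↦ ?_
    by_cases hj : j < n
    · simpa [hj] using h_bound n j hj
    · simpa [hj] using (norm_nonneg _).trans (h_bound (j + 1) j j.lt_succ_self)

theorem norm_one_sub_div_le_one {𝕜 : Type*} [RCLike 𝕜] {j n : ℕ} (h : j ≤ n) :
    ‖(1 - j / n : 𝕜)‖ ≤ 1 := by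
  have : (1 - j / n : 𝕜) = ((1 - j / n : ℝ) : 𝕜) := by push_cast; rfl
  rw [this, RCLike.norm_ofReal, abs_le]
  constructor
  · have : (j / n : ℝ) ≤ 1 := div_le_one_of_le₀ (by exact_mod_cast h) (by positivity)
    linarith
  · have : (0 : ℝ) ≤ j / n := by positivity
    linarith

theorem tendsto_sum_range_one_sub_div_pow_mul_geometric {𝕜 : Type*} [RCLike 𝕜] {z : 𝕜}
    (hz : ‖z‖ < 1) (k : ℕ) :
    Tendsto (fun n : ℕ ↦ ∑ j ∈ range n, (1 - j / n : 𝕜) ^ k * z ^ j) atTop (𝓝 (1 - z)⁻¹) := by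
  rw [← tsum_geometric_of_norm_lt_one hz]
  refine tendsto_sum_range_of_dominated_convergence
    (summable_geometric_of_lt_one (norm_nonneg z) hz) (fun j ↦ ?_) fun n j hj ↦ ?_
  · have hdiv : Tendsto (fun n : ℕ ↦ (j / n : 𝕜)) atTop (𝓝 0) :=
      tendsto_const_div_atTop_nhds_zero_nat (j : 𝕜)
    simpa using (((tendsto_const_nhds (x := (1 : 𝕜))).sub hdiv).pow k).mul_const (z ^ j)
  · rw [norm_mul, norm_pow, norm_pow]
    exact mul_le_of_le_one_left (by positivity)
      (pow_le_one₀ (norm_nonneg _) (norm_one_sub_div_le_one hj.le))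

theorem one_div_mul_sum_Icc_pow_mul_pow {K : Type*} [Field K] [CharZero K] {β : K} (hβ : β ≠ 0)
    {n : ℕ} (hn : n ≠ 0) (k : ℕ) :
    1 / ((n : K) ^ k * β ^ n) * ∑ i ∈ Icc 1 n, (i : K) ^ k * β ^ i
      = ∑ j ∈ range n, (1 - j / n : K) ^ k * β⁻¹ ^ j := by
  rw [sum_Icc_one_eq_sum_range_sub, mul_sum]
  refine sum_congr rfl fun j hj ↦ ?_
  have hjn : j ≤ n := (mem_range.mp hj).le
  have hn' : (n : K) ≠ 0 := Nat.cast_ne_zero.mpr hn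
  rw [Nat.cast_sub hjn, pow_sub₀ β hβ hjn, one_sub_div hn', div_pow, inv_pow]
  field_simp

theorem series_limit (β : ℂ) (hβ : 1 < ‖β‖) (k : ℕ) :
    Tendsto (fun X : ℕ => (1 / ((X : ℂ) ^ k * β ^ X)) * ∑ N ∈ Finset.Icc 1 X, (N : ℂ) ^ k * β ^ N)
      atTop (nhds (β / (β - 1))) := by
  have hβ0 : β ≠ 0 := norm_pos_iff.mp (one_pos.trans hβ)
  have hβ_inv : ‖β⁻¹‖ < 1 := by rw [norm_inv]; exact inv_lt_one_of_one_lt₀ hβ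
  have hlim : (1 - β⁻¹)⁻¹ = β / (β - 1) := by
    have hβ1 : β - 1 ≠ 0 := sub_ne_zero.mpr fun h ↦ by simp [h] at hβ
    field_simp
  rw [← hlim]
  refine (tendsto_sum_range_one_sub_div_pow_mul_geometric hβ_inv k).congr' ?_
  filter_upwards [eventually_ne_atTop 0] with X hX
  exact (one_div_mul_sum_Icc_pow_mul_pow hβ0 hX k).symm
end

section
/- Let θ_1, …, θ_N be real numbers and define Z(θ) = ∏_{j=1}^{N} (1 − e^{i(θ_j − θ)})(1 − e^{i(−θ_j − θ)}) as a function of θ ∈ ℝ. Then for each j with 1 ≤ j ≤ N, the derivative satisfies |Z'(θ_j)| = 2^N · |sin θ_j| · ∏_{k ≠ j} |cos θ_j − cos θ_k|. -/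
open Finset Complex

/-!
Write `e(x) = exp (i x)`. The `j`-th factor of `Z` contains `1 - e(θⱼ - θ)`, which vanishes at
`θ = θⱼ` with derivative `i`, so `Z'(θⱼ)` is `i` times `Z(θ)` with that one factor removed,
evaluated at `θⱼ`. Since `‖1 - e(x)‖ = 2 |sin (x / 2)|`, the remaining factor `1 - e(-2θⱼ)` has
norm `2 |sin θⱼ|`, and by the product-to-sum formula each full factor `k ≠ j` has norm
`4 |sin ((θₖ - θ) / 2) sin ((θₖ + θ) / 2)| = 2 |cos θ - cos θₖ|`.
-/

section VanishingFactor

variable {𝕜 𝔸 : Type*} [NontriviallyNormedField 𝕜] {a : 𝕜}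

theorem HasDerivAt.mul_of_apply_eq_zero [NormedRing 𝔸] [NormedAlgebra 𝕜 𝔸] {f g : 𝕜 → 𝔸}
    {f' : 𝔸} (hf : HasDerivAt f f' a) (hfa : f a = 0) (hg : DifferentiableAt 𝕜 g a) :
    HasDerivAt (fun x => f x * g x) (f' * g a) a := by
  simpa [hfa] using hf.fun_mul hg.hasDerivAt

theorem HasDerivAt.finsetProd_of_apply_eq_zero [NormedCommRing 𝔸] [NormedAlgebra 𝕜 𝔸]
    {ι : Type*} [DecidableEq ι] {u : Finset ι} {f : ι → 𝕜 → 𝔸} {f' : 𝔸} {j : ι} (hj : j ∈ u)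
    (hf : HasDerivAt (f j) f' a) (hfa : f j a = 0)
    (hg : ∀ k ∈ u.erase j, DifferentiableAt 𝕜 (f k) a) :
    HasDerivAt (fun x => ∏ k ∈ u, f k x) (f' * ∏ k ∈ u.erase j, f k a) a := by
  convert hf.mul_of_apply_eq_zero hfa (DifferentiableAt.fun_finsetProd hg) using 1
  exact funext fun x => (mul_prod_erase u (f · x) hj).symm

end VanishingFactor

namespace Complex

theorem hasDerivAt_one_sub_exp_I_mul_sub (z : ℂ) (x : ℝ) :
    HasDerivAt (fun θ : ℝ => 1 - exp (I * (z - θ))) (I * exp (I * (z - x))) x := by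
  have hlin : HasDerivAt (fun θ : ℝ => I * (z - θ)) (-I) x := by
    simpa using (((hasDerivAt_id x).ofReal_comp).const_sub z).const_mul I
  simpa [mul_comm] using hlin.cexp.const_sub 1

theorem hasDerivAt_charFactor_self (a : ℝ) :
    HasDerivAt (fun θ : ℝ => (1 - exp (I * (a - θ))) * (1 - exp (I * (-a - θ))))
      (I * (1 - exp (I * (-a - a)))) a := by
  simpa using (hasDerivAt_one_sub_exp_I_mul_sub a a).mul_of_apply_eq_zero (by simp)
    (hasDerivAt_one_sub_exp_I_mul_sub (-a) a).differentiableAt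

theorem norm_one_sub_exp_I_mul_ofReal (x : ℝ) : ‖1 - exp (I * x)‖ = 2 * |Real.sin (x / 2)| := by
  rw [norm_sub_rev, norm_exp_I_mul_ofReal_sub_one, Real.norm_eq_abs, abs_mul, abs_two]

theorem norm_one_sub_exp_I_mul_sub (a x : ℝ) :
    ‖1 - exp (I * (a - x))‖ = 2 * |Real.sin ((a - x) / 2)| := by
  exact_mod_cast norm_one_sub_exp_I_mul_ofReal (a - x)

theorem norm_charFactor (a x : ℝ) :
    ‖(1 - exp (I * (a - x))) * (1 - exp (I * (-a - x)))‖ = 2 * |Real.cos x - Real.cos a| := by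
  rw [norm_mul, norm_one_sub_exp_I_mul_sub, ← ofReal_neg, norm_one_sub_exp_I_mul_sub,
    show (a - x) / 2 = -((x - a) / 2) by ring, show (-a - x) / 2 = -((x + a) / 2) by ring,
    Real.sin_neg, Real.sin_neg, abs_neg, abs_neg, Real.cos_sub_cos, abs_mul, abs_mul, abs_neg,
    abs_two]
  ring

end Complex

theorem abs_deriv_char_poly_general (N : ℕ) (θs : Fin N → ℝ) (j : Fin N) :
    ‖(deriv (fun θ : ℝ => ∏ k : Fin N,
        ((1 - Complex.exp (Complex.I * ((θs k : ℂ) - (θ : ℂ)))) *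
          (1 - Complex.exp (Complex.I * (-(θs k : ℂ) - (θ : ℂ)))))) (θs j))‖ =
    2 ^ N * |Real.sin (θs j)| *
      ∏ k ∈ Finset.univ.erase j, |Real.cos (θs j) - Real.cos (θs k)| := by
  have hZ := HasDerivAt.finsetProd_of_apply_eq_zero (mem_univ j) (f := fun k (θ : ℝ) =>
      (1 - exp (I * ((θs k : ℂ) - θ))) * (1 - exp (I * (-(θs k : ℂ) - θ))))
    (hasDerivAt_charFactor_self (θs j)) (by simp) fun k _ =>
      (hasDerivAt_one_sub_exp_I_mul_sub _ _).differentiableAt.mul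
        (hasDerivAt_one_sub_exp_I_mul_sub _ _).differentiableAt
  have hsin : ‖1 - exp (I * (-(θs j : ℂ) - θs j))‖ = 2 * |Real.sin (θs j)| := by
    rw [← ofReal_neg, norm_one_sub_exp_I_mul_sub, show (-θs j - θs j) / 2 = -θs j by ring,
      Real.sin_neg, abs_neg]
  rw [hZ.deriv, norm_mul, norm_mul, norm_I, one_mul, hsin, norm_prod]
  simp only [norm_charFactor, prod_mul_distrib, prod_const]
  have hpow : 2 * 2 ^ #(univ.erase j) = (2 : ℝ) ^ N := by
    rw [← pow_succ', card_erase_add_one (mem_univ j), card_univ, Fintype.card_fin]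
  rw [← hpow]
  ring

theorem abs_deriv_char_poly (N : ℕ) (hN : 0 < N) (θs : Fin N → ℝ) (j : Fin N) :
    ‖(deriv (fun θ : ℝ => ∏ k : Fin N,
        ((1 - Complex.exp (Complex.I * ((θs k : ℂ) - (θ : ℂ)))) *
          (1 - Complex.exp (Complex.I * (-(θs k : ℂ) - (θ : ℂ)))))) (θs j))‖ =
    2 ^ N * |Real.sin (θs j)| *
      ∏ k ∈ Finset.univ.erase j, |Real.cos (θs j) - Real.cos (θs k)| :=
  abs_deriv_char_poly_general N θs j
end

section
/- Andréief's identity: for measurable functions f_1, …, f_N, g_1, …, g_N and a weight w on an interval X ⊆ ℝ (with all products f_j g_k w integrable on X), one has (1/N!) ∫_{X^N} det[f_j(x_k)]_{j,k} · det[g_j(x_k)]_{j,k} · ∏_{j=1}^{N} w(x_j) dx_1 ⋯ dx_N = det[ ∫_X f_j(x) g_k(x) w(x) dx ]_{j,k}. -/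
/-!
Expanding `det [g j (x k)]` over permutations `τ`, each term `det [f i (x k)] * ∏ k, g (τ k) (x k)`
integrates, by Fubini on the expansion of the remaining determinant, to
`det [∫ f i * g (τ k)] = sign τ * det [∫ f i * g k]`; so all `N!` terms contribute the same
determinant. The weight is absorbed into the `g j` by scaling the columns.
-/

open MeasureTheory Finset Matrix Equiv

namespace MeasureTheory

variable {ι α 𝕜 : Type*} [Fintype ι] [DecidableEq ι] [MeasurableSpace α] [RCLike 𝕜]
  {μ : Measure α} [SigmaFinite μ]

theorem integrable_det_mul_prod {f h : ι → α → 𝕜}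
    (hfh : ∀ i k, Integrable (fun x => f i x * h k x) μ) :
    Integrable (fun x : ι → α => det (of fun i k => f i (x k)) * ∏ k, h k (x k))
      (Measure.pi fun _ => μ) := by
  simp_rw [det_apply', sum_mul, mul_assoc, of_apply, ← prod_mul_distrib]
  exact integrable_finsetSum _ fun σ _ =>
    (Integrable.fintype_prod fun k => hfh (σ k) k).const_mul _

theorem integral_det_mul_prod {f h : ι → α → 𝕜}
    (hfh : ∀ i k, Integrable (fun x => f i x * h k x) μ) :
    ∫ x : ι → α, det (of fun i k => f i (x k)) * ∏ k, h k (x k) ∂Measure.pi (fun _ => μ) =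
      det (of fun i k => ∫ x, f i x * h k x ∂μ) := by
  simp_rw [det_apply', sum_mul, mul_assoc, of_apply, ← prod_mul_distrib]
  rw [integral_finsetSum _ fun σ _ =>
    (Integrable.fintype_prod fun k => hfh (σ k) k).const_mul _]
  refine sum_congr rfl fun σ _ => ?_
  rw [integral_const_mul, integral_fintype_prod_eq_prod fun k y => f (σ k) y * h k y]

theorem integral_det_mul_det {f g : ι → α → 𝕜}
    (hfg : ∀ i j, Integrable (fun x => f i x * g j x) μ) :
    ∫ x : ι → α, det (of fun i k => f i (x k)) * det (of fun j k => g j (x k))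
        ∂Measure.pi (fun _ => μ) =
      (Fintype.card ι).factorial * det (of fun i j => ∫ x, f i x * g j x ∂μ) := by
  set M : Matrix ι ι 𝕜 := of fun i j => ∫ x, f i x * g j x ∂μ
  have hexpand (x : ι → α) : det (of fun j k => g j (x k)) =
      ∑ τ : Perm ι, (Perm.sign τ : 𝕜) * ∏ k, g (τ k) (x k) := det_apply' _
  simp_rw [hexpand, mul_sum, mul_left_comm (det _)]
  rw [integral_finsetSum _ fun τ _ =>
    (integrable_det_mul_prod fun i k => hfg i (τ k)).const_mul _]
  calc _ = ∑ τ : Perm ι, (Perm.sign τ : 𝕜) * det (M.submatrix id τ) := by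
        refine sum_congr rfl fun τ _ => ?_
        rw [integral_const_mul, integral_det_mul_prod fun i k => hfg i (τ k)]
        rfl
    _ = ∑ _τ : Perm ι, det M := by
        refine sum_congr rfl fun τ _ => ?_
        rw [det_permute', ← mul_assoc, ← Int.cast_mul, Int.units_coe_mul_self, Int.cast_one,
          one_mul]
    _ = (Fintype.card ι).factorial * det M := by
        rw [sum_const, card_univ, Fintype.card_perm, nsmul_eq_mul]

end MeasureTheory

theorem andreief_identity_general (N : ℕ) (X : Set ℝ)
    (f g : Fin N → ℝ → ℝ) (w : ℝ → ℝ)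
    (hint : ∀ j k : Fin N, IntegrableOn (fun x => f j x * g k x * w x) X) :
    (1 / (N.factorial : ℝ)) *
      ∫ x : Fin N → ℝ in Set.univ.pi (fun _ => X),
        (Matrix.det (Matrix.of fun j k : Fin N => f j (x k))) *
          (Matrix.det (Matrix.of fun j k : Fin N => g j (x k))) *
          ∏ j : Fin N, w (x j) =
    Matrix.det (Matrix.of fun j k : Fin N => ∫ x in X, f j x * g k x * w x) := by
  have hweight (x : Fin N → ℝ) :
      det (of fun j k => f j (x k)) * det (of fun j k => g j (x k)) * ∏ j, w (x j) =
        det (of fun j k => f j (x k)) * det (of fun j k => w (x k) * g j (x k)) := by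
    rw [mul_assoc, mul_comm (det (of fun j k => g j (x k))), ← det_mul_row]
    rfl
  have hweighted (j k : Fin N) :
      (fun x => f j x * (w x * g k x)) = fun x => f j x * g k x * w x :=
    funext fun x => by ring
  simp_rw [volume_pi, Measure.restrict_pi_pi, hweight]
  rw [integral_det_mul_det (g := fun k y => w y * g k y) fun j k => hweighted j k ▸ hint j k]
  simp_rw [hweighted, Fintype.card_fin]
  field_simp

theorem andreief_identity (N : ℕ) (hN : 0 < N) (X : Set ℝ) (hX : MeasurableSet X)
    (f g : Fin N → ℝ → ℝ) (w : ℝ → ℝ)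
    (hint : ∀ j k : Fin N, IntegrableOn (fun x => f j x * g k x * w x) X) :
    (1 / (N.factorial : ℝ)) *
      ∫ x : Fin N → ℝ in Set.univ.pi (fun _ => X),
        (Matrix.det (Matrix.of fun j k : Fin N => f j (x k))) *
          (Matrix.det (Matrix.of fun j k : Fin N => g j (x k))) *
          ∏ j : Fin N, w (x j) =
    Matrix.det (Matrix.of fun j k : Fin N => ∫ x in X, f j x * g k x * w x) :=
  andreief_identity_general N X f g w hint
end
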